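/- arXiv:2212.13681 — 2 statements merged into one kernel-verified Lean document; each statement's English description precedes it below -/
import Mathlib

section
/- Let n ≥ 2, let (z_j)_{j∈I} be a Parseval frame of ℂⁿ which does C₂-stable phase retrieval (in ℓ₂), let (e_j)_{j=1}^n be the standard unit vector basis of ℂⁿ, let k ∈ ℕ, and let (x_j)_{j∈J} be the family consisting of (e_j)_{j=1}^n together with k copies of (k^{−1/2} z_j)_{j∈I}. Then: (1) (x_j)_{j∈J} is a tight frame of ℂⁿ with frame bound 2; (2) for every p > 2, (x_j)_{j∈J} has upper p-frame bound 2^{1/2} and lower p-frame bound n^{1/p − 1/2}; (3) (x_j)_{j∈J} does C₂-stable phase retrieval in ℓ₂(J). -/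
open scoped ComplexInnerProductSpace

private theorem aux_hasSum_sumElim {α β M : Type*} [AddCommMonoid M] [TopologicalSpace M]
    [ContinuousAdd M] {f : α → M} {g : β → M} {a b : M}
    (hf : HasSum f a) (hg : HasSum g b) : HasSum (Sum.elim f g) (a + b) := by
  have h1 : HasSum (Sum.elim f g ∘ (Sum.inl : α → α ⊕ β)) a := hf
  have h2 : HasSum (Sum.elim f g ∘ (Sum.inr : β → α ⊕ β)) b := hg
  exact HasSum.add_isCompl Set.isCompl_range_inl_range_inr
    (Sum.inl_injective.hasSum_range_iff.mpr h1)
    (Sum.inr_injective.hasSum_range_iff.mpr h2)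

private theorem aux_hasSum_prod_snd {k : ℕ} {I : Type*} {h : I → ℝ} (h0 : ∀ i, 0 ≤ h i)
    {a : ℝ} (ha : HasSum h a) : HasSum (fun ti : Fin k × I => h ti.2) ((k : ℝ) * a) := by
  have hsummable : Summable (fun s : Σ _ : Fin k, I => h s.2) :=
    (summable_sigma_of_nonneg (β := fun _ => I) (fun s => h0 s.2)).mpr
      ⟨fun _ => ha.summable, Summable.of_finite⟩
  have hsig : HasSum (fun s : Σ _ : Fin k, I => h s.2) ((k : ℝ) * a) := by
    refine HasSum.sigma_of_hasSum ?_ (fun _ => ha) hsummable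
    have h2 := hasSum_fintype (fun _ : Fin k => a)
    simpa [Finset.sum_const, nsmul_eq_mul] using h2
  exact (Equiv.sigmaEquivProd (Fin k) I).hasSum_iff.mp hsig

private theorem aux_power_mean {n : ℕ} (hn : 0 < n) (g : Fin n → ℝ) (hg : ∀ m, 0 ≤ g m)
    {p : ℝ} (hp : 2 ≤ p) :
    ∑ m, g m ^ 2 ≤ (n : ℝ) ^ (1 - 2 / p) * (∑ m, g m ^ p) ^ (2 / p) := by
  have hp0 : 0 < p := lt_of_lt_of_le two_pos hp
  have hn0 : (0:ℝ) < n := by exact_mod_cast hn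
  have hq : 1 ≤ p / 2 := by linarith
  have key := Real.arith_mean_le_rpow_mean (Finset.univ) (fun _ : Fin n => (n:ℝ)⁻¹)
    (fun m => g m ^ 2) (fun _ _ => by positivity)
    (by simp [Finset.sum_const, Finset.card_univ]; field_simp) (fun m _ => sq_nonneg _) hq
  have hgp : ∀ m : Fin n, ((g m ^ 2 : ℝ)) ^ (p/2) = g m ^ p := by
    intro m
    rw [← Real.rpow_natCast (g m) 2, ← Real.rpow_mul (hg m)]
    congr 1
    push_cast
    ring
  have hdiv : 1 / (p / 2) = 2 / p := one_div_div p 2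
  rw [hdiv] at key
  simp only [hgp] at key
  have hL : ∑ m : Fin n, (n:ℝ)⁻¹ * g m ^ 2 = (n:ℝ)⁻¹ * ∑ m, g m ^ 2 := by
    rw [Finset.mul_sum]
  have hR : ∑ m : Fin n, (n:ℝ)⁻¹ * g m ^ p = (n:ℝ)⁻¹ * ∑ m, g m ^ p := by
    rw [Finset.mul_sum]
  rw [hL, hR] at key
  have hS0 : 0 ≤ ∑ m, g m ^ p :=
    Finset.sum_nonneg fun m _ => Real.rpow_nonneg (hg m) p
  have hmul : ((n:ℝ)⁻¹ * ∑ m, g m ^ p) ^ (2/p) =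
      ((n:ℝ)⁻¹) ^ (2/p) * (∑ m, g m ^ p) ^ (2/p) :=
    Real.mul_rpow (by positivity) hS0
  rw [hmul] at key
  have key2 : ∑ m, g m ^ 2 ≤ (n:ℝ) * (((n:ℝ)⁻¹) ^ (2/p) * (∑ m, g m ^ p) ^ (2/p)) := by
    have := mul_le_mul_of_nonneg_left key (le_of_lt hn0)
    calc ∑ m, g m ^ 2 = (n:ℝ) * ((n:ℝ)⁻¹ * ∑ m, g m ^ 2) := by field_simp
      _ ≤ (n:ℝ) * (((n:ℝ)⁻¹) ^ (2/p) * (∑ m, g m ^ p) ^ (2/p)) := this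
  have hpow : (n:ℝ) * ((n:ℝ)⁻¹) ^ (2/p) = (n:ℝ) ^ (1 - 2/p) := by
    rw [Real.inv_rpow (le_of_lt hn0), Real.rpow_sub hn0, Real.rpow_one]
    ring
  calc ∑ m, g m ^ 2 ≤ (n:ℝ) * (((n:ℝ)⁻¹) ^ (2/p) * (∑ m, g m ^ p) ^ (2/p)) := key2
    _ = (n : ℝ) ^ (1 - 2 / p) * (∑ m, g m ^ p) ^ (2 / p) := by rw [← mul_assoc, hpow]

/-- If `(z i)` is a Parseval frame of `ℂⁿ` (`n ≥ 2`) doing `C₂`-stable phase retrieval in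
`ℓ₂`, and `(x j)` consists of the standard unit vector basis of `ℂⁿ` together with `k`
copies of `(k^{-1/2} z i)`, then `(x j)` is a tight frame of `ℂⁿ` with frame bound `2`;
for every `p > 2` it has upper `p`-frame bound `2^{1/2}` and lower `p`-frame bound
`n^{1/p - 1/2}`; and it does `C₂`-stable phase retrieval in `ℓ₂`. -/
theorem stmt_16 (n : ℕ) (hn : 2 ≤ n) {I : Type*} (z : I → EuclideanSpace ℂ (Fin n))
    (hz_summable : ∀ u : EuclideanSpace ℂ (Fin n), Summable fun i => ‖⟪u, z i⟫‖ ^ 2)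
    (hz_parseval : ∀ u : EuclideanSpace ℂ (Fin n), ∑' i, ‖⟪u, z i⟫‖ ^ 2 = ‖u‖ ^ 2)
    (C₂ : ℝ)
    (hz_spr : ∀ u v : EuclideanSpace ℂ (Fin n),
      (⨅ lam : {c : ℂ // ‖c‖ = 1}, ‖u - (lam : ℂ) • v‖) ≤
        C₂ * Real.sqrt (∑' i, (‖⟪u, z i⟫‖ - ‖⟪v, z i⟫‖) ^ 2))
    (k : ℕ) (hk : 0 < k)
    (x : Fin n ⊕ (Fin k × I) → EuclideanSpace ℂ (Fin n))
    (hx : x = Sum.elim (fun j => EuclideanSpace.single j (1 : ℂ))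
      (fun ji => ((((Real.sqrt k)⁻¹ : ℝ) : ℂ)) • z ji.2)) :
    ((∀ u : EuclideanSpace ℂ (Fin n), Summable fun j => ‖⟪u, x j⟫‖ ^ 2) ∧
      ∀ u : EuclideanSpace ℂ (Fin n), ∑' j, ‖⟪u, x j⟫‖ ^ 2 = 2 * ‖u‖ ^ 2) ∧
    (∀ p : ℝ, 2 < p → ∀ u : EuclideanSpace ℂ (Fin n),
      (n : ℝ) ^ (1 / p - 1 / 2) * ‖u‖ ≤ (∑' j, ‖⟪u, x j⟫‖ ^ p) ^ (1 / p) ∧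
        (∑' j, ‖⟪u, x j⟫‖ ^ p) ^ (1 / p) ≤ Real.sqrt 2 * ‖u‖) ∧
    (∀ u v : EuclideanSpace ℂ (Fin n),
      (⨅ lam : {c : ℂ // ‖c‖ = 1}, ‖u - (lam : ℂ) • v‖) ≤
        C₂ * Real.sqrt (∑' j, (‖⟪u, x j⟫‖ - ‖⟪v, x j⟫‖) ^ 2)) := by
  have hk0 : (0:ℝ) < k := by exact_mod_cast hk
  have hsk : (0:ℝ) < Real.sqrt k := Real.sqrt_pos.mpr hk0
  -- norms of inner products against the family
  have hinl : ∀ (u : EuclideanSpace ℂ (Fin n)) (m : Fin n),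
      ‖⟪u, x (Sum.inl m)⟫‖ = ‖u m‖ := by
    intro u m
    rw [hx]
    simp [EuclideanSpace.inner_single_right]
  have hinr : ∀ (u : EuclideanSpace ℂ (Fin n)) (ti : Fin k × I),
      ‖⟪u, x (Sum.inr ti)⟫‖ = (Real.sqrt k)⁻¹ * ‖⟪u, z ti.2⟫‖ := by
    intro u ti
    rw [hx]
    simp only [Sum.elim_inr, inner_smul_right, norm_mul, Complex.norm_real,
      Real.norm_eq_abs]
    rw [abs_of_nonneg (by positivity)]
  have hnrm : ∀ u : EuclideanSpace ℂ (Fin n), ‖u‖ ^ 2 = ∑ m, ‖u m‖ ^ 2 := by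
    intro u
    rw [EuclideanSpace.norm_eq, Real.sq_sqrt (Finset.sum_nonneg fun m _ => sq_nonneg _)]
  -- tight frame: HasSum of the squares
  have Hsq : ∀ u : EuclideanSpace ℂ (Fin n),
      HasSum (fun j => ‖⟪u, x j⟫‖ ^ 2) (2 * ‖u‖ ^ 2) := by
    intro u
    have heq : (fun j => ‖⟪u, x j⟫‖ ^ 2) =
        Sum.elim (fun m : Fin n => ‖u m‖ ^ 2)
          (fun ti : Fin k × I => (k:ℝ)⁻¹ * ‖⟪u, z ti.2⟫‖ ^ 2) := by
      funext j
      cases j with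
      | inl m => simp only [Sum.elim_inl, hinl u m]
      | inr ti =>
        simp only [Sum.elim_inr, hinr u ti, mul_pow, inv_pow, Real.sq_sqrt (le_of_lt hk0)]
    rw [heq]
    have h1 : HasSum (fun m : Fin n => ‖u m‖ ^ 2) (‖u‖ ^ 2) := by
      have := hasSum_fintype (fun m : Fin n => ‖u m‖ ^ 2)
      rwa [← hnrm u] at this
    have hz : HasSum (fun i => (k:ℝ)⁻¹ * ‖⟪u, z i⟫‖ ^ 2) ((k:ℝ)⁻¹ * ‖u‖ ^ 2) := by
      have := (hz_summable u).hasSum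
      rw [hz_parseval u] at this
      exact this.mul_left _
    have h2 := aux_hasSum_prod_snd (k := k) (fun i => by positivity) hz
    have hval : (k:ℝ) * ((k:ℝ)⁻¹ * ‖u‖ ^ 2) = ‖u‖ ^ 2 := by field_simp
    rw [hval] at h2
    have := aux_hasSum_sumElim h1 h2
    rwa [two_mul]
  refine ⟨⟨fun u => (Hsq u).summable, fun u => (Hsq u).tsum_eq⟩, ?_, ?_⟩
  · -- p-frame bounds
    intro p hp u
    have hp0 : (0:ℝ) < p := by linarith
    have hn0 : (0:ℝ) < n := by positivity
    set M : ℝ := Real.sqrt 2 * ‖u‖ with hM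
    have hM0 : 0 ≤ M := by positivity
    have hM2 : M ^ 2 = 2 * ‖u‖ ^ 2 := by
      rw [hM, mul_pow, Real.sq_sqrt (by norm_num : (0:ℝ) ≤ 2)]
    have hbd : ∀ j, ‖⟪u, x j⟫‖ ^ 2 ≤ 2 * ‖u‖ ^ 2 := by
      intro j
      have := Summable.le_tsum (Hsq u).summable j (fun j' _ => sq_nonneg _)
      rwa [(Hsq u).tsum_eq] at this
    have hMj : ∀ j, ‖⟪u, x j⟫‖ ≤ M := by
      intro j
      have h1 : ‖⟪u, x j⟫‖ ^ 2 ≤ M ^ 2 := by rw [hM2]; exact hbd j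
      have := Real.sqrt_le_sqrt h1
      rwa [Real.sqrt_sq (norm_nonneg _), Real.sqrt_sq hM0] at this
    have hple : ∀ j, ‖⟪u, x j⟫‖ ^ p ≤ M ^ (p - 2) * ‖⟪u, x j⟫‖ ^ 2 := by
      intro j
      have hsplit : ‖⟪u, x j⟫‖ ^ p = ‖⟪u, x j⟫‖ ^ ((2:ℝ)) * ‖⟪u, x j⟫‖ ^ (p - 2) := by
        rw [← Real.rpow_add_of_nonneg (norm_nonneg _) (by norm_num) (by linarith)]
        norm_num
      rw [hsplit]
      have h2 : ‖⟪u, x j⟫‖ ^ ((2:ℝ)) = ‖⟪u, x j⟫‖ ^ (2:ℕ) := by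
        rw [← Real.rpow_natCast ‖⟪u, x j⟫‖ 2]; norm_num
      rw [h2, mul_comm]
      exact mul_le_mul_of_nonneg_right
        (Real.rpow_le_rpow (norm_nonneg _) (hMj j) (by linarith)) (sq_nonneg _)
    have hsump : Summable (fun j => ‖⟪u, x j⟫‖ ^ p) :=
      Summable.of_nonneg_of_le (fun j => Real.rpow_nonneg (norm_nonneg _) p) hple
        ((Hsq u).summable.mul_left _)
    set T : ℝ := ∑' j, ‖⟪u, x j⟫‖ ^ p with hTdef
    have hT0 : 0 ≤ T := tsum_nonneg fun j => Real.rpow_nonneg (norm_nonneg _) p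
    constructor
    · -- lower bound
      set S2 : ℝ := ∑ m, ‖u m‖ ^ p with hS2def
      have hS20 : 0 ≤ S2 := Finset.sum_nonneg fun m _ => Real.rpow_nonneg (norm_nonneg _) p
      have hS2T : S2 ≤ T := by
        have heq : (fun j => ‖⟪u, x j⟫‖ ^ p) =
            Sum.elim (fun m : Fin n => ‖u m‖ ^ p)
              (fun ti : Fin k × I => ‖⟪u, x (Sum.inr ti)⟫‖ ^ p) := by
          funext j
          cases j with
          | inl m => simp only [Sum.elim_inl, hinl u m]
          | inr ti => simp only [Sum.elim_inr]
        have hG : Summable (fun ti : Fin k × I => ‖⟪u, x (Sum.inr ti)⟫‖ ^ p) :=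
          hsump.comp_injective Sum.inr_injective
        have hT : HasSum (fun j => ‖⟪u, x j⟫‖ ^ p)
            (S2 + ∑' ti : Fin k × I, ‖⟪u, x (Sum.inr ti)⟫‖ ^ p) := by
          rw [heq]
          exact aux_hasSum_sumElim (hasSum_fintype _) hG.hasSum
        have hTeq : T = S2 + ∑' ti : Fin k × I, ‖⟪u, x (Sum.inr ti)⟫‖ ^ p := hT.tsum_eq
        have : 0 ≤ ∑' ti : Fin k × I, ‖⟪u, x (Sum.inr ti)⟫‖ ^ p :=
          tsum_nonneg fun j => Real.rpow_nonneg (norm_nonneg _) p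
        linarith
      have hPM := aux_power_mean (by omega) (fun m => ‖u m‖) (fun m => norm_nonneg _)
        (le_of_lt hp)
      have hPM2 : ‖u‖ ^ 2 ≤ (n:ℝ) ^ (1 - 2/p) * T ^ (2/p) := by
        calc ‖u‖ ^ 2 = ∑ m, ‖u m‖ ^ 2 := hnrm u
          _ ≤ (n:ℝ) ^ (1 - 2/p) * S2 ^ (2/p) := hPM
          _ ≤ (n:ℝ) ^ (1 - 2/p) * T ^ (2/p) := by
            apply mul_le_mul_of_nonneg_left _ (Real.rpow_nonneg (le_of_lt hn0) _)
            exact Real.rpow_le_rpow hS20 hS2T (by positivity)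
      have huB : ‖u‖ ≤ (n:ℝ) ^ (1/2 - 1/p) * T ^ (1/p) := by
        have hsq : ((n:ℝ) ^ (1/2 - 1/p) * T ^ (1/p)) ^ 2 = (n:ℝ) ^ (1 - 2/p) * T ^ (2/p) := by
          rw [mul_pow, ← Real.rpow_natCast ((n:ℝ) ^ (1/2 - 1/p)) 2,
            ← Real.rpow_natCast (T ^ (1/p)) 2, ← Real.rpow_mul (le_of_lt hn0),
            ← Real.rpow_mul hT0]
          push_cast
          congr 1 <;> congr 1 <;> ring
        have h1 : ‖u‖ ^ 2 ≤ ((n:ℝ) ^ (1/2 - 1/p) * T ^ (1/p)) ^ 2 := by rw [hsq]; exact hPM2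
        have := Real.sqrt_le_sqrt h1
        rwa [Real.sqrt_sq (norm_nonneg _), Real.sqrt_sq (by positivity)] at this
      calc (n:ℝ) ^ (1/p - 1/2) * ‖u‖
          ≤ (n:ℝ) ^ (1/p - 1/2) * ((n:ℝ) ^ (1/2 - 1/p) * T ^ (1/p)) :=
            mul_le_mul_of_nonneg_left huB (Real.rpow_nonneg (le_of_lt hn0) _)
        _ = T ^ (1/p) := by
            rw [← mul_assoc, ← Real.rpow_add hn0]
            norm_num
    · -- upper bound
      have hTle : T ≤ M ^ p := by
        have h1 : T ≤ ∑' j, M ^ (p - 2) * ‖⟪u, x j⟫‖ ^ 2 :=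
          Summable.tsum_le_tsum hple hsump ((Hsq u).summable.mul_left _)
        have h2 : ∑' j, M ^ (p - 2) * ‖⟪u, x j⟫‖ ^ 2 = M ^ (p - 2) * (2 * ‖u‖ ^ 2) := by
          rw [tsum_mul_left, (Hsq u).tsum_eq]
        have h3 : M ^ (p - 2) * (2 * ‖u‖ ^ 2) = M ^ p := by
          rw [← hM2, ← Real.rpow_natCast M 2,
            ← Real.rpow_add_of_nonneg hM0 (by linarith) (by norm_num)]
          norm_num
        rw [h2, h3] at h1
        exact h1
      have h4 : T ^ (1/p) ≤ (M ^ p) ^ (1/p) :=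
        Real.rpow_le_rpow hT0 hTle (by positivity)
      have h5 : (M ^ p) ^ (1/p) = M := by
        rw [← Real.rpow_mul hM0, mul_one_div_cancel (ne_of_gt hp0), Real.rpow_one]
      rw [h5] at h4
      exact h4
  · -- stable phase retrieval
    have hC2 : 0 ≤ C₂ := by
      have i0 : Fin n := ⟨0, by omega⟩
      set e0 : EuclideanSpace ℂ (Fin n) := EuclideanSpace.single i0 1 with he0
      have hne : ‖e0‖ = 1 := by simp [he0]
      have h := hz_spr e0 0
      have hLHS : (⨅ lam : {c : ℂ // ‖c‖ = 1}, ‖e0 - (lam : ℂ) • (0:EuclideanSpace ℂ (Fin n))‖)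
          = 1 := by
        have : Nonempty {c : ℂ // ‖c‖ = 1} := ⟨⟨1, by simp⟩⟩
        simp [smul_zero, sub_zero, hne, ciInf_const]
      have hRHS : (∑' i, (‖⟪e0, z i⟫‖ - ‖⟪(0:EuclideanSpace ℂ (Fin n)), z i⟫‖) ^ 2) = 1 := by
        simp only [inner_zero_left, norm_zero, sub_zero]
        rw [hz_parseval e0, hne]
        norm_num
      rw [hLHS, hRHS] at h
      simp at h
      linarith
    intro u v
    set D : I → ℝ := fun i => (‖⟪u, z i⟫‖ - ‖⟪v, z i⟫‖) ^ 2 with hD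
    have hD0 : ∀ i, 0 ≤ D i := fun i => sq_nonneg _
    have hDsum : Summable D := by
      apply Summable.of_nonneg_of_le hD0
        (fun i => ?_) (((hz_summable u).add (hz_summable v)).mul_left 2)
      have := sq_nonneg (‖⟪u, z i⟫‖ + ‖⟪v, z i⟫‖)
      simp only [hD]
      nlinarith [sq_nonneg (‖⟪u, z i⟫‖ - ‖⟪v, z i⟫‖)]
    have heq : (fun j => (‖⟪u, x j⟫‖ - ‖⟪v, x j⟫‖) ^ 2) =
        Sum.elim (fun m : Fin n => (‖u m‖ - ‖v m‖) ^ 2)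
          (fun ti : Fin k × I => (k:ℝ)⁻¹ * D ti.2) := by
      funext j
      cases j with
      | inl m => simp only [Sum.elim_inl, hinl]
      | inr ti =>
        simp only [Sum.elim_inr, hinr, hD]
        rw [← mul_sub, mul_pow, inv_pow, Real.sq_sqrt (le_of_lt hk0)]
    have hzsum : HasSum (fun i => (k:ℝ)⁻¹ * D i) ((k:ℝ)⁻¹ * ∑' i, D i) :=
      hDsum.hasSum.mul_left _
    have h2 := aux_hasSum_prod_snd (k := k) (fun i => by positivity) hzsum
    have hval : (k:ℝ) * ((k:ℝ)⁻¹ * ∑' i, D i) = ∑' i, D i := by field_simp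
    rw [hval] at h2
    have hfin := hasSum_fintype (fun m : Fin n => (‖u m‖ - ‖v m‖) ^ 2)
    have htot := aux_hasSum_sumElim hfin h2
    rw [← heq] at htot
    have hmono : (∑' i, D i) ≤ ∑' j, (‖⟪u, x j⟫‖ - ‖⟪v, x j⟫‖) ^ 2 := by
      rw [htot.tsum_eq]
      have : 0 ≤ ∑ m, (‖u m‖ - ‖v m‖) ^ 2 := Finset.sum_nonneg fun m _ => sq_nonneg _
      linarith
    calc (⨅ lam : {c : ℂ // ‖c‖ = 1}, ‖u - (lam : ℂ) • v‖)
        ≤ C₂ * Real.sqrt (∑' i, D i) := hz_spr u v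
      _ ≤ C₂ * Real.sqrt (∑' j, (‖⟪u, x j⟫‖ - ‖⟪v, x j⟫‖) ^ 2) :=
          mul_le_mul_of_nonneg_left (Real.sqrt_le_sqrt hmono) hC2
end

section
/- Let n ≥ 2, let (z_j)_{j∈I} be a Parseval frame of ℂⁿ, let (e_j)_{j=1}^n be the standard unit vector basis of ℂⁿ, let k ∈ ℕ, p > 2, and let (x_j)_{j∈J} be the family consisting of (e_j)_{j=1}^n together with k copies of (k^{−1/2} z_j)_{j∈I}. Then for x = 2⁻¹(e₁ + e₂) and y = 2⁻¹(e₁ − e₂) one has Σ_{j∈J} ||⟨x, x_j⟩| − |⟨y, x_j⟩||^p ≤ k^{1 − p/2} and min_{|λ|=1} ‖x − λy‖ = 1 ≥ k^{1/2 − 1/p} (Σ_{j∈J} ||⟨x, x_j⟩| − |⟨y, x_j⟩||^p)^{1/p}. Consequently, if C_p < k^{1/2 − 1/p} then (x_j)_{j∈J} does not do C_p-stable phase retrieval in ℓ_p(J). -/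
open scoped ComplexInnerProductSpace

set_option maxHeartbeats 1000000

/-- Let `(z i)` be a Parseval frame of `ℂⁿ` (`n ≥ 2`) and let `(x j)` consist of the
standard unit vector basis of `ℂⁿ` together with `k` copies of `(k^{-1/2} z i)`. Then for
`u = 2⁻¹(e₁ + e₂)` and `v = 2⁻¹(e₁ - e₂)` one has
`∑ⱼ ||⟨u,xⱼ⟩| - |⟨v,xⱼ⟩||^p ≤ k^{1-p/2}` and
`min_{|λ|=1} ‖u - λv‖ = 1 ≥ k^{1/2-1/p} (∑ⱼ ||⟨u,xⱼ⟩| - |⟨v,xⱼ⟩||^p)^{1/p}`;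
consequently, if `C_p < k^{1/2-1/p}` then `(x j)` does not do `C_p`-stable phase retrieval
in `ℓ_p`. -/
theorem stmt_17 (n : ℕ) (hn : 2 ≤ n) {I : Type*} (z : I → EuclideanSpace ℂ (Fin n))
    (hz_summable : ∀ u : EuclideanSpace ℂ (Fin n), Summable fun i => ‖⟪u, z i⟫‖ ^ 2)
    (hz_parseval : ∀ u : EuclideanSpace ℂ (Fin n), ∑' i, ‖⟪u, z i⟫‖ ^ 2 = ‖u‖ ^ 2)
    (k : ℕ) (hk : 0 < k) (p : ℝ) (hp : 2 < p)
    (x : Fin n ⊕ (Fin k × I) → EuclideanSpace ℂ (Fin n))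
    (hx : x = Sum.elim (fun j => EuclideanSpace.single j (1 : ℂ))
      (fun ji => ((((Real.sqrt k)⁻¹ : ℝ) : ℂ)) • z ji.2))
    (u v : EuclideanSpace ℂ (Fin n))
    (hu : u = (2⁻¹ : ℂ) • (EuclideanSpace.single (⟨0, by omega⟩ : Fin n) (1 : ℂ) +
      EuclideanSpace.single (⟨1, by omega⟩ : Fin n) (1 : ℂ)))
    (hv : v = (2⁻¹ : ℂ) • (EuclideanSpace.single (⟨0, by omega⟩ : Fin n) (1 : ℂ) -
      EuclideanSpace.single (⟨1, by omega⟩ : Fin n) (1 : ℂ))) :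
    (∑' j, |‖⟪u, x j⟫‖ - ‖⟪v, x j⟫‖| ^ p ≤ (k : ℝ) ^ (1 - p / 2)) ∧
    ((⨅ lam : {c : ℂ // ‖c‖ = 1}, ‖u - (lam : ℂ) • v‖) = 1) ∧
    ((k : ℝ) ^ (1 / 2 - 1 / p) * (∑' j, |‖⟪u, x j⟫‖ - ‖⟪v, x j⟫‖| ^ p) ^ (1 / p) ≤ 1) ∧
    (∀ Cp : ℝ, Cp < (k : ℝ) ^ (1 / 2 - 1 / p) →
      ¬ (∀ u' v' : EuclideanSpace ℂ (Fin n),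
        (⨅ lam : {c : ℂ // ‖c‖ = 1}, ‖u' - (lam : ℂ) • v'‖) ≤
          Cp * (∑' j, |‖⟪u', x j⟫‖ - ‖⟪v', x j⟫‖| ^ p) ^ (1 / p))) := by
  have hp0 : (0:ℝ) < p := by linarith
  have hne : (⟨0, by omega⟩ : Fin n) ≠ (⟨1, by omega⟩ : Fin n) := by simp
  -- basic norms and orthogonality
  have hu2 : ‖u‖ ^ 2 = 1/2 := by
    rw [@norm_sq_eq_re_inner ℂ, hu]
    simp [-inner_self_eq_norm_sq_to_K, inner_smul_left, inner_smul_right, inner_add_left, inner_add_right,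
      EuclideanSpace.inner_single_left, EuclideanSpace.single_apply, hne, hne.symm]
    norm_num
  have hv2 : ‖v‖ ^ 2 = 1/2 := by
    rw [@norm_sq_eq_re_inner ℂ, hv]
    simp [-inner_self_eq_norm_sq_to_K, inner_smul_left, inner_smul_right, inner_sub_left, inner_sub_right,
      EuclideanSpace.inner_single_left, EuclideanSpace.single_apply, hne, hne.symm]
    norm_num
  have huv : ⟪u, v⟫ = 0 := by
    rw [hu, hv]
    simp [inner_smul_left, inner_smul_right, inner_add_left, inner_sub_right,
      EuclideanSpace.inner_single_left, EuclideanSpace.single_apply, hne, hne.symm]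
  -- claim 2 : the infimum is 1
  have claim2 : (⨅ lam : {c : ℂ // ‖c‖ = 1}, ‖u - (lam : ℂ) • v‖) = 1 := by
    have hconst : ∀ lam : {c : ℂ // ‖c‖ = 1}, ‖u - (lam : ℂ) • v‖ = 1 := by
      rintro ⟨lam, hlam⟩
      have h1 : ‖u - lam • v‖ ^ 2 = 1 := by
        rw [@norm_sub_sq ℂ]
        rw [inner_smul_right, huv, mul_zero, map_zero, norm_smul, hlam]
        rw [hu2, one_mul, hv2]
        norm_num
      nlinarith [norm_nonneg (u - lam • v)]
    have hne' : Nonempty {c : ℂ // ‖c‖ = 1} := ⟨⟨1, norm_one⟩⟩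
    rw [iInf_congr hconst]
    exact ciInf_const
  -- the per-index quantities over I
  set a : I → ℝ := fun i => ‖⟪u, z i⟫‖ with ha
  set b : I → ℝ := fun i => ‖⟪v, z i⟫‖ with hb
  have ha1 : ∀ i, a i ≤ 1 := by
    intro i
    have h1 : a i ^ 2 ≤ ∑' i, ‖⟪u, z i⟫‖ ^ 2 :=
      Summable.le_tsum (hz_summable u) i (fun _ _ => by positivity)
    rw [hz_parseval u, hu2] at h1
    nlinarith [norm_nonneg ⟪u, z i⟫]
  have hb1 : ∀ i, b i ≤ 1 := by
    intro i
    have h1 : b i ^ 2 ≤ ∑' i, ‖⟪v, z i⟫‖ ^ 2 :=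
      Summable.le_tsum (hz_summable v) i (fun _ _ => by positivity)
    rw [hz_parseval v, hv2] at h1
    nlinarith [norm_nonneg ⟪v, z i⟫]
  have ht_le : ∀ i, |a i - b i| ^ p ≤ a i ^ 2 + b i ^ 2 := by
    intro i
    have ha0 : 0 ≤ a i := norm_nonneg _
    have hb0 : 0 ≤ b i := norm_nonneg _
    have ht1 : |a i - b i| ≤ 1 := abs_le.2 ⟨by linarith [hb1 i], by linarith [ha1 i]⟩
    have h2 : |a i - b i| ^ p ≤ |a i - b i| ^ (2:ℝ) := by
      rcases eq_or_lt_of_le (abs_nonneg (a i - b i)) with h | h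
      · rw [← h, Real.zero_rpow (by linarith), Real.zero_rpow (by norm_num)]
      · exact Real.rpow_le_rpow_of_exponent_ge h ht1 (by linarith)
    have h3 : |a i - b i| ^ (2:ℝ) = (a i - b i) ^ 2 := by
      rw [show ((2:ℝ)) = ((2:ℕ):ℝ) by norm_num, Real.rpow_natCast, sq_abs]
    calc |a i - b i| ^ p ≤ (a i - b i) ^ 2 := by rw [← h3]; exact h2
      _ ≤ a i ^ 2 + b i ^ 2 := by nlinarith [mul_nonneg ha0 hb0]
  have hS_summable : Summable fun i => |a i - b i| ^ p :=
    Summable.of_nonneg_of_le (fun i => Real.rpow_nonneg (abs_nonneg _) p) ht_le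
      ((hz_summable u).add (hz_summable v))
  have hS_nonneg : 0 ≤ ∑' i, |a i - b i| ^ p :=
    tsum_nonneg (fun i => Real.rpow_nonneg (abs_nonneg _) p)
  have hS_le : ∑' i, |a i - b i| ^ p ≤ 1 := by
    calc ∑' i, |a i - b i| ^ p ≤ ∑' i, (a i ^ 2 + b i ^ 2) :=
          Summable.tsum_le_tsum ht_le hS_summable ((hz_summable u).add (hz_summable v))
      _ = (∑' i, a i ^ 2) + ∑' i, b i ^ 2 := Summable.tsum_add (hz_summable u) (hz_summable v)
      _ = 1 := by rw [ha, hb]; simp only []; rw [hz_parseval u, hz_parseval v, hu2, hv2]; norm_num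
  -- constants
  set c : ℝ := (Real.sqrt k)⁻¹ with hc
  have hk0 : (0:ℝ) < (k:ℝ) := by exact_mod_cast hk
  have hc0 : 0 ≤ c := by positivity
  have hcp : c ^ p = (k:ℝ) ^ (-(p/2)) := by
    rw [hc, Real.sqrt_eq_rpow, ← Real.rpow_neg_one, ← Real.rpow_mul hk0.le,
      ← Real.rpow_mul hk0.le]
    congr 1
    ring
  -- the function f over the index sum type
  have hfinl : ∀ j : Fin n, |‖⟪u, x (Sum.inl j)⟫‖ - ‖⟪v, x (Sum.inl j)⟫‖| ^ p = 0 := by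
    intro j
    have heq : ‖⟪u, x (Sum.inl j)⟫‖ = ‖⟪v, x (Sum.inl j)⟫‖ := by
      rw [hx]
      show ‖⟪u, EuclideanSpace.single j (1:ℂ)⟫‖ = ‖⟪v, EuclideanSpace.single j (1:ℂ)⟫‖
      rw [EuclideanSpace.inner_single_right, EuclideanSpace.inner_single_right, one_mul, one_mul,
        RCLike.norm_conj, RCLike.norm_conj, hu, hv]
      show ‖(2⁻¹:ℂ) * _‖ = ‖(2⁻¹:ℂ) * _‖
      simp only [Equiv.toFun_as_coe, WithLp.equiv_apply, WithLp.ofLp_add, WithLp.ofLp_sub, Pi.add_apply, Pi.sub_apply, PiLp.add_apply, PiLp.sub_apply, EuclideanSpace.single_apply]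
      split_ifs with h1 h2 <;> simp_all
    rw [heq, sub_self, abs_zero, Real.zero_rpow (by linarith)]
  have hfinr : ∀ q : Fin k × I, |‖⟪u, x (Sum.inr q)⟫‖ - ‖⟪v, x (Sum.inr q)⟫‖| ^ p
      = c ^ p * |a q.2 - b q.2| ^ p := by
    intro q
    have h1 : ∀ w : EuclideanSpace ℂ (Fin n), ‖⟪w, x (Sum.inr q)⟫‖ = c * ‖⟪w, z q.2⟫‖ := by
      intro w
      rw [hx]
      show ‖⟪w, ((c : ℂ)) • z q.2⟫‖ = _
      rw [inner_smul_right, norm_mul, Complex.norm_real, Real.norm_of_nonneg hc0]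
    rw [h1, h1, ← mul_sub, abs_mul, abs_of_nonneg hc0,
      Real.mul_rpow hc0 (abs_nonneg _)]
  -- summability and value of the full tsum
  have hprod_summable : Summable fun q : Fin k × I => c ^ p * |a q.2 - b q.2| ^ p := by
    apply (summable_prod_of_nonneg (fun q => by positivity)).2
    exact ⟨fun j => hS_summable.mul_left _, Summable.of_finite⟩
  have hT_eq : (∑' j, |‖⟪u, x j⟫‖ - ‖⟪v, x j⟫‖| ^ p)
      = (k:ℝ) * (c ^ p * ∑' i, |a i - b i| ^ p) := by
    have hsupp : Function.support (fun j => |‖⟪u, x j⟫‖ - ‖⟪v, x j⟫‖| ^ p)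
        ⊆ Set.range Sum.inr := by
      intro j hj
      rcases j with j | q
      · exact absurd (hfinl j) hj
      · exact ⟨q, rfl⟩
    rw [← Sum.inr_injective.tsum_eq hsupp]
    calc (∑' q : Fin k × I, |‖⟪u, x (Sum.inr q)⟫‖ - ‖⟪v, x (Sum.inr q)⟫‖| ^ p)
        = ∑' q : Fin k × I, c ^ p * |a q.2 - b q.2| ^ p := by
          exact tsum_congr hfinr
      _ = ∑' (j : Fin k), ∑' (i : I), c ^ p * |a i - b i| ^ p := by
          exact Summable.tsum_prod' hprod_summable (fun j => hS_summable.mul_left _)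
      _ = ∑ (j : Fin k), ∑' (i : I), c ^ p * |a i - b i| ^ p := tsum_fintype _
      _ = (k:ℝ) * (c ^ p * ∑' i, |a i - b i| ^ p) := by
          rw [Finset.sum_const, Finset.card_univ, Fintype.card_fin, nsmul_eq_mul,
            tsum_mul_left]
  -- claim 1
  have hkcp : (k:ℝ) * c ^ p = (k:ℝ) ^ (1 - p/2) := by
    rw [hcp, sub_eq_add_neg, Real.rpow_add hk0, Real.rpow_one]
  have claim1 : (∑' j, |‖⟪u, x j⟫‖ - ‖⟪v, x j⟫‖| ^ p) ≤ (k:ℝ) ^ (1 - p/2) := by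
    rw [hT_eq, ← mul_assoc, hkcp]
    nlinarith [Real.rpow_pos_of_pos hk0 (1 - p/2)]
  -- claim 3
  have hK0 : (0:ℝ) < (k:ℝ) ^ (1/2 - 1/p) := Real.rpow_pos_of_pos hk0 _
  have hT0 : 0 ≤ ∑' j, |‖⟪u, x j⟫‖ - ‖⟪v, x j⟫‖| ^ p := by
    rw [hT_eq]; positivity
  have claim3 : (k:ℝ) ^ (1/2 - 1/p) * (∑' j, |‖⟪u, x j⟫‖ - ‖⟪v, x j⟫‖| ^ p) ^ (1/p) ≤ 1 := by
    have h1 : (∑' j, |‖⟪u, x j⟫‖ - ‖⟪v, x j⟫‖| ^ p) ^ (1/p) ≤ ((k:ℝ) ^ (1 - p/2)) ^ (1/p) :=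
      Real.rpow_le_rpow hT0 claim1 (by positivity)
    have h2 : ((k:ℝ) ^ (1 - p/2)) ^ (1/p) = (k:ℝ) ^ (1/p - 1/2) := by
      rw [← Real.rpow_mul hk0.le]
      congr 1
      have hpne : p ≠ 0 := ne_of_gt hp0
      field_simp
    calc (k:ℝ) ^ (1/2 - 1/p) * (∑' j, |‖⟪u, x j⟫‖ - ‖⟪v, x j⟫‖| ^ p) ^ (1/p)
        ≤ (k:ℝ) ^ (1/2 - 1/p) * (k:ℝ) ^ (1/p - 1/2) := by
          exact mul_le_mul_of_nonneg_left (h2 ▸ h1) hK0.le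
      _ = 1 := by rw [← Real.rpow_add hk0]; norm_num
  refine ⟨claim1, claim2, claim3, ?_⟩
  intro Cp hCp h
  have h1 := h u v
  rw [claim2] at h1
  set T := (∑' j, |‖⟪u, x j⟫‖ - ‖⟪v, x j⟫‖| ^ p) ^ (1/p) with hT
  have hTnn : 0 ≤ T := Real.rpow_nonneg hT0 _
  rcases eq_or_lt_of_le hTnn with hT0' | hT0'
  · rw [← hT0', mul_zero] at h1; linarith
  · have : Cp * T < (k:ℝ) ^ (1/2 - 1/p) * T := mul_lt_mul_of_pos_right hCp hT0'
    linarith [claim3]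
end
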